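/- Theorem A, part (b): with μ the Gibbs measure of f on a finite product space and 𝒫 a partition such that ‖∇f(x,·) - ∇f(y,·)‖_∞ < δn whenever x, y lie in the same cell, we have Σ_{P∈𝒫} μ(P) ∫ D(μ|_P ‖ ξ_{∇f(y,·)}) μ|_P(dy) < H_μ(𝒫) + δn. -/

import Mathlib

open Real Finset

/-- A probability mass function on a finite type. -/
def IsPMF {α : Type*} [Fintype α] (μ : α → ℝ) : Prop :=
  (∀ x, 0 ≤ μ x) ∧ ∑ x, μ x = 1

/-- Kullback–Leibler divergence. -/
noncomputable def KL {α : Type*} [Fintype α] (μ γ : α → ℝ) : ℝ :=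
  ∑ x, μ x * Real.log (μ x / γ x)

/-- The Gibbs measure of the potential `f` relative to the reference measure `l`. -/
noncomputable def gibbs {α : Type*} [Fintype α] (f : α → ℝ) (l : α → ℝ) : α → ℝ :=
  fun x => Real.exp (f x) * l x / ∑ y, Real.exp (f y) * l y

/-- Product of the measures `l i` on the product space. -/
noncomputable def prodMeas {n : ℕ} {K : Fin n → Type*} [∀ i, Fintype (K i)]
    (l : ∀ i, K i → ℝ) : (∀ i, K i) → ℝ :=
  fun x => ∏ i, l i (x i)

/-- Discrete partial derivative `∂ᵢf(x,y)` with reference points `star`. -/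
noncomputable def dpart {n : ℕ} {K : Fin n → Type*} (f : (∀ i, K i) → ℝ)
    (star : ∀ i, K i) (i : Fin n) (x : ∀ j, K j) (y : K i) : ℝ :=
  f (Function.update x i y) - f (Function.update x i (star i))

/-- Discrete gradient `∇f(x,y) = Σᵢ ∂ᵢf(x,yᵢ)` with reference points `star`. -/
noncomputable def dgrad {n : ℕ} {K : Fin n → Type*} (f : (∀ i, K i) → ℝ)
    (star : ∀ i, K i) (x y : ∀ i, K i) : ℝ :=
  ∑ i, dpart f star i x (y i)

/-- The product Gibbs measure `ξ_{∇f(x,·)} = ∏ᵢ ξ_{∂ᵢf(x,·)}` of the additively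
separable potential `∇f(x,·)`. -/
noncomputable def xiGrad {n : ℕ} {K : Fin n → Type*} [∀ i, Fintype (K i)]
    (f : (∀ i, K i) → ℝ) (star : ∀ i, K i) (l : ∀ i, K i → ℝ) (x : ∀ i, K i) :
    (∀ i, K i) → ℝ :=
  fun y => ∏ i, gibbs (dpart f star i x) (l i) (y i)

/-- Shannon entropy of a probability mass function. -/
noncomputable def ent {α : Type*} [Fintype α] (μ : α → ℝ) : ℝ :=
  -∑ x, μ x * Real.log (μ x)

/-- Glue a value `y` in coordinate `i` to a configuration `z` of the remaining coordinates. -/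
def glue {n : ℕ} {K : Fin n → Type*} (i : Fin n)
    (z : (j : {j : Fin n // j ≠ i}) → K j.1) (y : K i) : ∀ j, K j :=
  fun j => if h : j = i then cast (congrArg K h.symm) y else z ⟨j, h⟩

/-- Marginal of a measure on `∏ j, K j` on the coordinates other than `i`. -/
noncomputable def margRest {n : ℕ} {K : Fin n → Type*} [∀ i, Fintype (K i)]
    (μ : (∀ j, K j) → ℝ) (i : Fin n) : ((j : {j : Fin n // j ≠ i}) → K j.1) → ℝ :=
  fun z => ∑ y : K i, μ (glue i z y)

/-- Dual total correlation: `DTC(μ) = H(μ) - Σᵢ H_μ(xᵢ | x_{[n]∖i})`, where the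
conditional entropy is `H(μ) - H(margRest μ i)`. -/
noncomputable def DTC {n : ℕ} {K : Fin n → Type*} [∀ i, Fintype (K i)]
    (μ : (∀ j, K j) → ℝ) : ℝ :=
  ent μ - ∑ i, (ent μ - ent (margRest μ i))

/-- Mass of the cell labelled `j` of the partition given by the labelling `c`. -/
noncomputable def cellMass {α : Type*} [Fintype α] {I : Type*} [Fintype I] [DecidableEq I]
    (μ : α → ℝ) (c : α → I) (j : I) : ℝ :=
  ∑ x, if c x = j then μ x else 0

/-- The measure `μ` conditioned on the cell labelled `j`. -/
noncomputable def condMeas {α : Type*} [Fintype α] {I : Type*} [Fintype I] [DecidableEq I]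
    (μ : α → ℝ) (c : α → I) (j : I) : α → ℝ :=
  fun x => if c x = j then μ x / cellMass μ c j else 0

/-- Shannon entropy of the partition given by the labelling `c`, under `μ`. -/
noncomputable def partEnt {α : Type*} [Fintype α] {I : Type*} [Fintype I] [DecidableEq I]
    (μ : α → ℝ) (c : α → I) : ℝ :=
  -∑ j, cellMass μ c j * Real.log (cellMass μ c j)

/-
Write `ν = μ|_P` and `ξ_y = ξ_{∇f(y,·)}`. Since `log ξ_y(x) = ∇f(y,x) + log λ(x) - log Z(y)`,
the normalisers `Z` cancel when `x` and `y` are both averaged against `ν`, and the left-hand side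
equals `H_μ(𝒫) + Σₓ μ(x) log (μ(x) / ξₓ(x)) + Σ_P μ(P) E_{x,y∼μ|_P} [∇f(x,x) - ∇f(y,x)]`.
The last term is `< δn` by hypothesis. For the Gibbs measure `ξₓ(x) = ∏ᵢ μ(xᵢ | x_{-i})`, so the
middle term is `-DTC(μ)`, which is `≤ 0` by the discrete Loomis–Whitney inequality together with
Gibbs' inequality `log t ≤ t - 1`.
-/

theorem sum_mul_lt_of_forall_lt {β : Type*} [Fintype β] {p v : β → ℝ} {B : ℝ}
    (hp : ∀ b, 0 ≤ p b) (hp1 : ∑ b, p b = 1) (hv : ∀ b, p b ≠ 0 → v b < B) :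
    ∑ b, p b * v b < B := by
  obtain ⟨b₀, hb₀⟩ : ∃ b, p b ≠ 0 := by
    by_contra! h
    simp [h] at hp1
  calc ∑ b, p b * v b < ∑ b, p b * B := by
        refine Finset.sum_lt_sum (fun b _ => ?_) ⟨b₀, Finset.mem_univ _, ?_⟩
        · rcases eq_or_ne (p b) 0 with h | h
          · simp [h]
          · exact mul_le_mul_of_nonneg_left (hv b h).le (hp b)
        · exact mul_lt_mul_of_pos_left (hv b₀ hb₀) ((hp b₀).lt_of_ne' hb₀)
    _ = B := by rw [← Finset.sum_mul, hp1, one_mul]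

section ConditionalProbability

variable {ι : Type*} [Fintype ι] [DecidableEq ι] {K : ι → Type*} [∀ i, Fintype (K i)]

open MeasureTheory in
theorem sum_prod_sum_update_rpow_le (hι : 2 ≤ Fintype.card ι)
    (g : (∀ i, K i) → ℝ) (hg : ∀ x, 0 ≤ g x) :
    ∑ x, ∏ i, (∑ u, g (Function.update x i u)) ^ ((1 : ℝ) / (Fintype.card ι - 1 : ℝ))
      ≤ (∑ x, g x) ^ ((Fintype.card ι : ℝ) / (Fintype.card ι - 1 : ℝ)) := by
  let _ : ∀ i, MeasurableSpace (K i) := fun _ => ⊤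
  have hι' : (1 : ℝ) < Fintype.card ι := by exact_mod_cast hι
  have hexp : (0 : ℝ) ≤ 1 / (Fintype.card ι - 1 : ℝ) := by
    have := sub_pos.2 hι'
    positivity
  have hconj : Real.HolderConjugate (Fintype.card ι)
      ((Fintype.card ι : ℝ) / (Fintype.card ι - 1 : ℝ)) :=
    (Real.holderConjugate_iff_eq_conjExponent hι').2 rfl
  have hpi : ∀ x, Measure.pi (fun i => (Measure.count : Measure (K i))) {x} = 1 := fun x => by
    rw [← Set.univ_pi_singleton, Measure.pi_pi]
    simp
  have hLW := lintegral_prod_lintegral_pow_le (fun i => (Measure.count : Measure (K i))) hconj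
    (f := fun x => ENNReal.ofReal (g x)) (measurable_of_countable _)
  simp only [lintegral_fintype, hpi, Measure.count_singleton, mul_one] at hLW
  have hsum : ∀ x i, 0 ≤ ∑ u, g (Function.update x i u) := fun x i =>
    Finset.sum_nonneg fun u _ => hg _
  rw [← ENNReal.ofReal_sum_of_nonneg fun x _ => hg x,
    ENNReal.ofReal_rpow_of_nonneg (Finset.sum_nonneg fun x _ => hg x) (by positivity)] at hLW
  simp_rw [← ENNReal.ofReal_sum_of_nonneg fun u _ => hg _,
    ENNReal.ofReal_rpow_of_nonneg (hsum _ _) hexp,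
    ← ENNReal.ofReal_prod_of_nonneg fun i _ => Real.rpow_nonneg (hsum _ i) _] at hLW
  rw [← ENNReal.ofReal_sum_of_nonneg fun x _ => Finset.prod_nonneg fun i _ =>
    Real.rpow_nonneg (hsum x i) _] at hLW
  exact (ENNReal.ofReal_le_ofReal_iff
    (Real.rpow_nonneg (Finset.sum_nonneg fun x _ => hg x) _)).1 hLW

noncomputable def condProb (μ : (∀ i, K i) → ℝ) (i : ι) (x : ∀ i, K i) : ℝ :=
  μ x / ∑ u, μ (Function.update x i u)

theorem sum_update_le_sum {μ : (∀ i, K i) → ℝ} (hμ : ∀ x, 0 ≤ μ x) (x : ∀ i, K i) (i : ι) :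
    ∑ u, μ (Function.update x i u) ≤ ∑ y, μ y := by
  classical
  rw [← Finset.sum_image fun u _ v _ h => Function.update_injective x i h]
  exact Finset.sum_le_univ_sum_of_nonneg hμ

theorem log_div_prod_condProb {μ : (∀ i, K i) → ℝ} (hμ : ∀ x, 0 < μ x) (x : ∀ i, K i) :
    Real.log (μ x / ∏ i, condProb μ i x) = ∑ i, Real.log (∑ u, μ (Function.update x i u))
      - (Fintype.card ι - 1) * Real.log (μ x) := by
  have hm : ∀ i, 0 < ∑ u, μ (Function.update x i u) := fun i =>
    Finset.sum_pos (fun u _ => hμ _) ⟨x i, Finset.mem_univ _⟩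
  have hc : ∀ i, condProb μ i x ≠ 0 := fun i => (div_pos (hμ x) (hm i)).ne'
  rw [Real.log_div (hμ x).ne' (Finset.prod_ne_zero_iff.2 fun i _ => hc i),
    Real.log_prod fun i _ => hc i]
  simp only [condProb, Real.log_div (hμ x).ne' (hm _).ne', Finset.sum_sub_distrib,
    Finset.sum_const, Finset.card_univ, nsmul_eq_mul]
  ring

theorem sum_mul_log_div_prod_condProb_nonpos [Nonempty ι] {μ : (∀ i, K i) → ℝ}
    (hμ : ∀ x, 0 < μ x) (hμ1 : ∑ x, μ x = 1) :
    ∑ x, μ x * Real.log (μ x / ∏ i, condProb μ i x) ≤ 0 := by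
  simp only [log_div_prod_condProb hμ]
  set N : ℝ := (Fintype.card ι : ℝ)
  set m : (∀ i, K i) → ι → ℝ := fun x i => ∑ u, μ (Function.update x i u)
  have hm : ∀ x i, 0 < m x i := fun x i =>
    Finset.sum_pos (fun u _ => hμ _) ⟨x i, Finset.mem_univ _⟩
  rcases (Nat.one_le_iff_ne_zero.2 Fintype.card_ne_zero : 1 ≤ Fintype.card ι).eq_or_lt
    with h1 | h2
  · have hN : N = 1 := by simp [N, ← h1]
    simp only [hN, sub_self, zero_mul, sub_zero]
    refine Finset.sum_nonpos fun x _ => mul_nonpos_of_nonneg_of_nonpos (hμ x).le ?_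
    exact Finset.sum_nonpos fun i _ =>
      Real.log_nonpos (hm x i).le (hμ1 ▸ sum_update_le_sum (fun y => (hμ y).le) x i)
  · have hN : 0 < N - 1 := by
      have : (1 : ℝ) < N := by simp only [N]; exact_mod_cast h2
      linarith
    set ρ : (∀ i, K i) → ℝ := fun x => ∏ i, m x i ^ (1 / (N - 1))
    have hρ : ∀ x, 0 < ρ x := fun x =>
      Finset.prod_pos fun i _ => Real.rpow_pos_of_pos (hm x i) _
    have hlogρ : ∀ x, ∑ i, Real.log (m x i) = (N - 1) * Real.log (ρ x) := fun x => by
      rw [Real.log_prod fun i _ => (Real.rpow_pos_of_pos (hm x i) _).ne', Finset.mul_sum]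
      refine Finset.sum_congr rfl fun i _ => ?_
      rw [Real.log_rpow (hm x i)]
      field_simp
    have hgibbs : ∀ x, μ x * (∑ i, Real.log (m x i) - (N - 1) * Real.log (μ x))
        ≤ (N - 1) * (ρ x - μ x) := fun x => by
      have hlog_le := Real.log_le_sub_one_of_pos (div_pos (hρ x) (hμ x))
      rw [Real.log_div (hρ x).ne' (hμ x).ne'] at hlog_le
      have hμx := hμ x
      calc μ x * (∑ i, Real.log (m x i) - (N - 1) * Real.log (μ x))
          = (N - 1) * (μ x * (Real.log (ρ x) - Real.log (μ x))) := by rw [hlogρ]; ring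
        _ ≤ (N - 1) * (μ x * (ρ x / μ x - 1)) := by gcongr
        _ = (N - 1) * (ρ x - μ x) := by field_simp
    have hLW : ∑ x, ρ x ≤ 1 := by
      have := sum_prod_sum_update_rpow_le (by omega) μ (fun x => (hμ x).le)
      rwa [hμ1, Real.one_rpow] at this
    calc _ ≤ ∑ x, (N - 1) * (ρ x - μ x) := Finset.sum_le_sum fun x _ => hgibbs x
      _ = (N - 1) * (∑ x, ρ x - 1) := by rw [← Finset.mul_sum, Finset.sum_sub_distrib, hμ1]
      _ ≤ 0 := mul_nonpos_of_nonneg_of_nonpos hN.le (by linarith)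

end ConditionalProbability

section Gibbs

variable {α : Type*} [Fintype α]

theorem gibbs_pos [Nonempty α] (g : α → ℝ) {l : α → ℝ} (hl : ∀ a, 0 < l a) (a : α) :
    0 < gibbs g l a :=
  div_pos (mul_pos (Real.exp_pos _) (hl a))
    (Finset.sum_pos (fun b _ => mul_pos (Real.exp_pos _) (hl b)) Finset.univ_nonempty)

theorem sum_gibbs [Nonempty α] (g : α → ℝ) {l : α → ℝ} (hl : ∀ a, 0 < l a) :
    ∑ a, gibbs g l a = 1 := by
  unfold gibbs
  rw [← Finset.sum_div]
  exact div_self (Finset.sum_pos (fun b _ => mul_pos (Real.exp_pos _) (hl b))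
    Finset.univ_nonempty).ne'

theorem gibbs_eq_div_sum (g l : α → ℝ) {ν : α → ℝ} {κ : ℝ} (hκ : κ ≠ 0)
    (hν : ∀ a, ν a = κ * (Real.exp (g a) * l a)) (a : α) :
    gibbs g l a = ν a / ∑ b, ν b := by
  simp only [gibbs, hν, ← Finset.mul_sum, mul_div_mul_left _ _ hκ]

end Gibbs

section Product

variable {n : ℕ} {K : Fin n → Type*} [∀ i, Fintype (K i)]

theorem prodMeas_pos {l : ∀ i, K i → ℝ} (hl : ∀ i u, 0 < l i u) (x : ∀ i, K i) :
    0 < prodMeas l x :=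
  Finset.prod_pos fun i _ => hl i (x i)

theorem prodMeas_update (l : ∀ i, K i → ℝ) (x : ∀ i, K i) (i : Fin n) (u : K i) :
    prodMeas l (Function.update x i u) = l i u * ∏ j ∈ Finset.univ.erase i, l j (x j) := by
  rw [prodMeas, ← Finset.mul_prod_erase _ _ (Finset.mem_univ i), Function.update_self]
  congr 1
  exact Finset.prod_congr rfl fun j hj => by
    rw [Function.update_of_ne (Finset.ne_of_mem_erase hj)]

theorem gibbs_dpart_eq {l : ∀ i, K i → ℝ} (hl : ∀ i u, 0 < l i u) (star : ∀ i, K i)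
    (f : (∀ i, K i) → ℝ) (x : ∀ i, K i) (i : Fin n) (u : K i) :
    gibbs (dpart f star i x) (l i) u = gibbs f (prodMeas l) (Function.update x i u)
      / ∑ v, gibbs f (prodMeas l) (Function.update x i v) := by
  have hZ : 0 < ∑ y, Real.exp (f y) * prodMeas l y :=
    Finset.sum_pos (fun y _ => mul_pos (Real.exp_pos _) (prodMeas_pos hl y)) ⟨x, Finset.mem_univ _⟩
  refine gibbs_eq_div_sum _ _ (ν := fun v => gibbs f (prodMeas l) (Function.update x i v))
    (κ := Real.exp (f (Function.update x i (star i))) * (∏ j ∈ Finset.univ.erase i, l j (x j))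
      / ∑ y, Real.exp (f y) * prodMeas l y) ?_ (fun v => ?_) u
  · exact (div_pos (mul_pos (Real.exp_pos _) (Finset.prod_pos fun j _ => hl j (x j))) hZ).ne'
  · simp only [gibbs, dpart, prodMeas_update, Real.exp_sub]
    field_simp

theorem xiGrad_self_eq {l : ∀ i, K i → ℝ} (hl : ∀ i u, 0 < l i u) (star : ∀ i, K i)
    (f : (∀ i, K i) → ℝ) (x : ∀ i, K i) :
    xiGrad f star l x x = ∏ i, condProb (gibbs f (prodMeas l)) i x := by
  refine Finset.prod_congr rfl fun i _ => ?_
  rw [gibbs_dpart_eq hl, Function.update_eq_self, condProb]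

theorem xiGrad_pos {l : ∀ i, K i → ℝ} (hl : ∀ i u, 0 < l i u) (f : (∀ i, K i) → ℝ)
    (star y x : ∀ i, K i) : 0 < xiGrad f star l y x :=
  Finset.prod_pos fun i _ =>
    have : Nonempty (K i) := ⟨x i⟩
    gibbs_pos _ (hl i) _

theorem xiGrad_eq (f : (∀ i, K i) → ℝ) (star : ∀ i, K i) (l : ∀ i, K i → ℝ) (y x : ∀ i, K i) :
    xiGrad f star l y x = Real.exp (dgrad f star y x) * prodMeas l x
      / ∏ i, ∑ u, Real.exp (dpart f star i y u) * l i u := by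
  simp only [xiGrad, gibbs, dgrad, Real.exp_sum, prodMeas, Finset.prod_div_distrib,
    Finset.prod_mul_distrib]

theorem log_xiGrad {l : ∀ i, K i → ℝ} (hl : ∀ i u, 0 < l i u) (f : (∀ i, K i) → ℝ)
    (star y x : ∀ i, K i) :
    Real.log (xiGrad f star l y x) = dgrad f star y x + Real.log (prodMeas l x)
      + -Real.log (∏ i, ∑ u, Real.exp (dpart f star i y u) * l i u) := by
  have hW : 0 < ∏ i, ∑ u, Real.exp (dpart f star i y u) * l i u :=
    Finset.prod_pos fun i _ => Finset.sum_pos (fun u _ => mul_pos (Real.exp_pos _) (hl i u))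
      ⟨y i, Finset.mem_univ _⟩
  rw [xiGrad_eq, Real.log_div (mul_pos (Real.exp_pos _) (prodMeas_pos hl x)).ne' hW.ne',
    Real.log_mul (Real.exp_pos _).ne' (prodMeas_pos hl x).ne', Real.log_exp]
  ring

end Product

theorem sum_mul_KL_eq_of_log_eq {α : Type*} [Fintype α] {ν : α → ℝ} (hν : ∑ x, ν x = 1)
    {ξ : α → α → ℝ} (hξ : ∀ y x, ξ y x ≠ 0) (a : α → α → ℝ) (b e : α → ℝ)
    (hlog : ∀ y x, Real.log (ξ y x) = a y x + b x + e y) :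
    ∑ y, ν y * KL ν (ξ y)
      = ∑ x, ν x * (Real.log (ν x / ξ x x) + ∑ y, ν y * (a x x - a y x)) := by
  have hterm : ∀ y x, ν x * Real.log (ν x / ξ y x)
      = ν x * (Real.log (ν x / ξ x x) + (a x x - a y x)) + ν x * (e x - e y) := fun y x => by
    rcases eq_or_ne (ν x) 0 with h | h
    · simp [h]
    · rw [Real.log_div h (hξ y x), Real.log_div h (hξ x x), hlog, hlog]
      ring
  have he : ∑ y, ν y * ∑ x, ν x * (e x - e y) = 0 := by
    simp only [mul_sub, Finset.sum_sub_distrib, ← Finset.sum_mul, hν, one_mul, sub_self]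
  calc ∑ y, ν y * KL ν (ξ y)
      = ∑ y, ν y * (∑ x, ν x * (Real.log (ν x / ξ x x) + (a x x - a y x))
          + ∑ x, ν x * (e x - e y)) := Finset.sum_congr rfl fun y _ => by
        rw [KL, Finset.sum_congr rfl fun x _ => hterm y x, Finset.sum_add_distrib]
    _ = ∑ x, ∑ y, ν y * (ν x * (Real.log (ν x / ξ x x) + (a x x - a y x))) := by
        rw [← Finset.sum_comm]
        simp only [mul_add, Finset.sum_add_distrib]
        rw [he, add_zero]
        simp only [Finset.mul_sum]
    _ = _ := Finset.sum_congr rfl fun x _ => by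
        simp only [mul_add, Finset.sum_add_distrib, Finset.mul_sum, ← Finset.sum_mul, hν]
        rw [one_mul]
        exact congrArg _ (Finset.sum_congr rfl fun y _ => mul_left_comm _ _ _)

section Partition

variable {α : Type*} [Fintype α] {I : Type*} [Fintype I] [DecidableEq I]
  {μ : α → ℝ} (c : α → I)

theorem sum_cellMass_mul (g : I → ℝ) :
    ∑ j, cellMass μ c j * g j = ∑ x, μ x * g (c x) := by
  simp only [cellMass, Finset.sum_mul, ite_mul, zero_mul]
  rw [Finset.sum_comm]
  simp

theorem condMeas_eq_zero_of_ne {j : I} {x : α} (h : c x ≠ j) : condMeas μ c j x = 0 :=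
  if_neg h

theorem condMeas_nonneg (hμ : ∀ x, 0 ≤ μ x) (j : I) (x : α) : 0 ≤ condMeas μ c j x := by
  unfold condMeas
  split_ifs
  · exact div_nonneg (hμ x) (Finset.sum_nonneg fun y _ => by split_ifs <;> simp [hμ y])
  · rfl

theorem le_cellMass (hμ : ∀ x, 0 ≤ μ x) (x : α) : μ x ≤ cellMass μ c (c x) := by
  have := Finset.single_le_sum (f := fun y => if c y = c x then μ y else 0)
    (fun y _ => by split_ifs <;> simp [hμ y]) (Finset.mem_univ x)
  simpa [cellMass] using this

theorem sum_condMeas {j : I} (hj : cellMass μ c j ≠ 0) : ∑ x, condMeas μ c j x = 1 := by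
  have : ∀ x, condMeas μ c j x = (if c x = j then μ x else 0) / cellMass μ c j := fun x => by
    unfold condMeas; split_ifs <;> simp
  simp only [this, ← Finset.sum_div]
  exact div_self hj

theorem cellMass_mul_condMeas (hμ : ∀ x, 0 ≤ μ x) (j : I) (x : α) :
    cellMass μ c j * condMeas μ c j x = if c x = j then μ x else 0 := by
  unfold condMeas
  split_ifs with h
  · subst h
    rcases eq_or_ne (cellMass μ c (c x)) 0 with h0 | h0
    · rw [h0, zero_mul, eq_comm]
      exact le_antisymm (h0 ▸ le_cellMass c hμ x) (hμ x)
    · exact mul_div_cancel₀ _ h0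
  · exact mul_zero _

theorem sum_cellMass_mul_sum_condMeas (hμ : ∀ x, 0 ≤ μ x) (G : I → α → ℝ) :
    ∑ j, cellMass μ c j * ∑ x, condMeas μ c j x * G j x = ∑ x, μ x * G (c x) x := by
  simp only [Finset.mul_sum, ← mul_assoc, cellMass_mul_condMeas c hμ, ite_mul, zero_mul]
  rw [Finset.sum_comm]
  simp

theorem sum_cellMass_mul_sum_condMeas_mul_KL_eq (hμ : ∀ x, 0 ≤ μ x) {ξ : α → α → ℝ}
    (hξ : ∀ y x, ξ y x ≠ 0) (a : α → α → ℝ) (b e : α → ℝ)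
    (hlog : ∀ y x, Real.log (ξ y x) = a y x + b x + e y) :
    ∑ j, cellMass μ c j * ∑ y, condMeas μ c j y * KL (condMeas μ c j) (ξ y)
      = partEnt μ c + ∑ x, μ x * Real.log (μ x / ξ x x)
        + ∑ x, μ x * ∑ y, condMeas μ c (c x) y * (a x x - a y x) := by
  have hcell : ∀ j, cellMass μ c j * ∑ y, condMeas μ c j y * KL (condMeas μ c j) (ξ y)
      = cellMass μ c j * ∑ x, condMeas μ c j x * (Real.log (condMeas μ c j x / ξ x x)
          + ∑ y, condMeas μ c j y * (a x x - a y x)) := fun j => by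
    rcases eq_or_ne (cellMass μ c j) 0 with hj | hj
    · simp [hj]
    · rw [sum_mul_KL_eq_of_log_eq (sum_condMeas c hj) hξ a b e hlog]
  have hlog_cond : ∀ x, μ x * Real.log (condMeas μ c (c x) x / ξ x x)
      = μ x * Real.log (μ x / ξ x x) - μ x * Real.log (cellMass μ c (c x)) := fun x => by
    rcases (hμ x).eq_or_lt with h | h
    · simp [← h]
    · have hw := h.trans_le (le_cellMass c hμ x)
      rw [condMeas, if_pos rfl, div_right_comm,
        Real.log_div (div_ne_zero h.ne' (hξ x x)) hw.ne', mul_sub]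
  simp only [hcell, sum_cellMass_mul_sum_condMeas c hμ, mul_add, Finset.sum_add_distrib,
    hlog_cond, Finset.sum_sub_distrib, partEnt]
  rw [sum_cellMass_mul c fun j => Real.log (cellMass μ c j)]
  ring

theorem sum_mul_sum_condMeas_mul_lt (hμ : ∀ x, 0 ≤ μ x) (hμ1 : ∑ x, μ x = 1)
    {D : α → α → ℝ} {B : ℝ} (hD : ∀ x y, c y = c x → D x y < B) :
    ∑ x, μ x * ∑ y, condMeas μ c (c x) y * D x y < B := by
  refine sum_mul_lt_of_forall_lt hμ hμ1 fun x hx => ?_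
  have hw : cellMass μ c (c x) ≠ 0 :=
    ((hμ x).lt_of_ne' hx |>.trans_le (le_cellMass c hμ x)).ne'
  refine sum_mul_lt_of_forall_lt (condMeas_nonneg c hμ _) (sum_condMeas c hw) fun y hy => ?_
  exact hD x y (by_contra fun h => hy (condMeas_eq_zero_of_ne c h))

end Partition

theorem theoremA_b_general {n : ℕ} (K : Fin n → Type*)
    [∀ i, Fintype (K i)]
    (l : ∀ i, K i → ℝ) (hlpos : ∀ i x, 0 < l i x)
    (star : ∀ i, K i) (f : (∀ i, K i) → ℝ)
    {I : Type*} [Fintype I] [DecidableEq I] (c : (∀ i, K i) → I)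
    (δ : ℝ)
    (hP : ∀ x y : ∀ i, K i, c x = c y →
      ∀ z, |dgrad f star x z - dgrad f star y z| < δ * n)
    (μ : (∀ i, K i) → ℝ) (hμ : μ = gibbs f (prodMeas l)) :
    (∑ j, cellMass μ c j *
        ∑ y, condMeas μ c j y * KL (condMeas μ c j) (xiGrad f star l y))
      < partEnt μ c + δ * n := by
  subst hμ
  have : Nonempty (Fin n) := by
    have h := hP star star rfl star
    rw [sub_self, abs_zero] at h
    exact ⟨⟨0, Nat.pos_of_ne_zero fun hn => by simp [hn] at h⟩⟩
  have : Nonempty (∀ i, K i) := ⟨star⟩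
  have hμ := gibbs_pos f (prodMeas_pos hlpos)
  have hμ1 := sum_gibbs f (prodMeas_pos hlpos)
  rw [sum_cellMass_mul_sum_condMeas_mul_KL_eq c (fun x => (hμ x).le)
    (fun y x => (xiGrad_pos hlpos f star y x).ne') _ _ _ (log_xiGrad hlpos f star)]
  have hDTC : ∑ x, gibbs f (prodMeas l) x
      * Real.log (gibbs f (prodMeas l) x / xiGrad f star l x x) ≤ 0 := by
    simp only [xiGrad_self_eq hlpos]
    exact sum_mul_log_div_prod_condProb_nonpos hμ hμ1
  have hgrad := sum_mul_sum_condMeas_mul_lt c (fun x => (hμ x).le) hμ1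
    fun x y hxy => (le_abs_self _).trans_lt (hP x y hxy.symm x)
  linarith

/-- Theorem A, part (b): if `𝒫` is a partition such that
`‖∇f(x,·) - ∇f(y,·)‖_∞ < δn` whenever `x,y` lie in the same cell, then
`Σ_P μ(P) ∫ D(μ|_P ‖ ξ_{∇f(y,·)}) μ|_P(dy) < H_μ(𝒫) + δn`. -/
theorem theoremA_b {n : ℕ} (hn : 0 < n) (K : Fin n → Type*)
    [∀ i, Fintype (K i)] [∀ i, Nonempty (K i)]
    (l : ∀ i, K i → ℝ) (hl : ∀ i, IsPMF (l i)) (hlpos : ∀ i x, 0 < l i x)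
    (star : ∀ i, K i) (f : (∀ i, K i) → ℝ)
    {I : Type*} [Fintype I] [DecidableEq I] (c : (∀ i, K i) → I)
    (δ : ℝ) (hδ : 0 < δ)
    (hP : ∀ x y : ∀ i, K i, c x = c y →
      ∀ z, |dgrad f star x z - dgrad f star y z| < δ * n)
    (μ : (∀ i, K i) → ℝ) (hμ : μ = gibbs f (prodMeas l)) :
    (∑ j, cellMass μ c j *
        ∑ y, condMeas μ c j y * KL (condMeas μ c j) (xiGrad f star l y))
      < partEnt μ c + δ * n :=
  theoremA_b_general K l hlpos star f c δ hP μ hμ
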